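/- arXiv:2509.25236 — 2 statements merged into one kernel-verified Lean document; each statement's English description precedes it below -/
import Mathlib

section
/- Let m₁ : Fin ℓ → Fin h and m₂ : Fin h → Fin k be surjective maps. Let V₁ ∈ ℝ^{ℓ×h} satisfy: (V₁)_{x,a} ≠ 0 implies m₁(x) = a, and let V₂ ∈ ℝ^{h×k} satisfy: (V₂)_{a,b} ≠ 0 implies m₂(a) = b. Then: (i) m₂ ∘ m₁ : Fin ℓ → Fin k is surjective; (ii) the product V₁V₂ ∈ ℝ^{ℓ×k} satisfies: (V₁V₂)_{x,b} ≠ 0 implies (m₂ ∘ m₁)(x) = b; (iii) if moreover V₁ᵀV₁ = I_h and V₂ᵀV₂ = I_k, then (V₁V₂)ᵀ(V₁V₂) = I_k. Hence the composition of two constructive linear causal abstractions is a valid constructive linear causal abstraction, SEP-compliant whenever both factors are. -/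
open Matrix

/-- Composition of constructive linear causal abstractions is a valid constructive
linear causal abstraction, SEP-compliant whenever both factors are. -/
theorem CLCA_composition
    (ℓ h k : ℕ)
    (m₁ : Fin ℓ → Fin h) (hm₁ : Function.Surjective m₁)
    (m₂ : Fin h → Fin k) (hm₂ : Function.Surjective m₂)
    (V₁ : Matrix (Fin ℓ) (Fin h) ℝ) (hV₁ : ∀ x a, V₁ x a ≠ 0 → m₁ x = a)
    (V₂ : Matrix (Fin h) (Fin k) ℝ) (hV₂ : ∀ a b, V₂ a b ≠ 0 → m₂ a = b) :
    Function.Surjective (m₂ ∘ m₁) ∧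
    (∀ x b, (V₁ * V₂) x b ≠ 0 → (m₂ ∘ m₁) x = b) ∧
    (V₁ᵀ * V₁ = 1 → V₂ᵀ * V₂ = 1 → (V₁ * V₂)ᵀ * (V₁ * V₂) = 1) := by
  refine ⟨hm₂.comp hm₁, ?_, ?_⟩
  · intro x b hne
    rw [Matrix.mul_apply] at hne
    obtain ⟨a, ha⟩ := Finset.exists_ne_zero_of_sum_ne_zero hne
    have h1 : V₁ x a ≠ 0 := fun h => ha.2 (by simp [h])
    have h2 : V₂ a b ≠ 0 := fun h => ha.2 (by simp [h])
    simp [Function.comp, hV₁ x a h1, hV₂ a b h2]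
  · intro h1 h2
    calc (V₁ * V₂)ᵀ * (V₁ * V₂) = V₂ᵀ * (V₁ᵀ * V₁) * V₂ := by
          rw [Matrix.transpose_mul, Matrix.mul_assoc, Matrix.mul_assoc, Matrix.mul_assoc]
      _ = 1 := by rw [h1]; simp [h2]
end

section
/- Let χ_v be a finite Borel measure on ℝ^{d_v}. Let F_emb be a finite index set of embedding edges: for each w ∈ F_emb a matrix V_w ∈ ℝ^{d_v×d_w} and a Borel measure χ_w on ℝ^{d_w} with χ_v = (V_w)_# χ_w. Let F_abs be a finite index set of abstraction edges: for each u ∈ F_abs a matrix V_u ∈ ℝ^{d_u×d_v} with V_uᵀV_u = I_{d_v} and a Borel measure χ_u = (V_u)_# χ_v. Let (λ_e)_{e ∈ F_emb ∪ F_abs} be nonnegative weights summing to 1 and let λ ∈ [0,1]. Then Σ_{w ∈ F_emb} λ_w • ( λ•χ_v + (1−λ)•(V_w)_# χ_w ) + Σ_{u ∈ F_abs} λ_u • (V_uᵀ)_# ( λ•χ_u + (1−λ)•(V_u)_# χ_v ) = χ_v. (Every global section of a consistent causal abstraction network is a fixed point of the CAN Laplacian operator: the local Laplacian value at each node equals the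 node's measure.) -/
open Matrix MeasureTheory
open scoped ENNReal

lemma mulVec_measurable {m n : ℕ} (M : Matrix (Fin m) (Fin n) ℝ) :
    Measurable (fun x => M.mulVec x) :=
  (LinearMap.continuous_of_finiteDimensional M.mulVecLin).measurable

/-- Every global section of a consistent causal abstraction network is a fixed point
of the CAN Laplacian operator: at a node `v`, the convex combination (with weights
`λ_e` summing to one) of the embedding-edge terms `λ•χ_v + (1-λ)•(V_w)_# χ_w` and of
the abstraction-edge terms `(V_uᵀ)_# (λ•χ_u + (1-λ)•(V_u)_# χ_v)` equals `χ_v`. -/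
theorem global_section_fixed_point_Laplacian
    (dv : ℕ)
    (ι : Type) [Fintype ι] (κ : Type) [Fintype κ]
    (dE : ι → ℕ) (dA : κ → ℕ)
    (VE : ∀ w : ι, Matrix (Fin dv) (Fin (dE w)) ℝ)
    (VA : ∀ u : κ, Matrix (Fin (dA u)) (Fin dv) ℝ)
    (χv : Measure (Fin dv → ℝ)) [IsFiniteMeasure χv]
    (χE : ∀ w : ι, Measure (Fin (dE w) → ℝ))
    (χA : ∀ u : κ, Measure (Fin (dA u) → ℝ))
    (hemb : ∀ w, χv = Measure.map (fun x => (VE w).mulVec x) (χE w))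
    (hstiefel : ∀ u, (VA u)ᵀ * VA u = 1)
    (habs : ∀ u, χA u = Measure.map (fun x => (VA u).mulVec x) χv)
    (lamE : ι → ℝ≥0∞) (lamA : κ → ℝ≥0∞)
    (hsum : ∑ w, lamE w + ∑ u, lamA u = 1)
    (lam : ℝ≥0∞) (hlam : lam ≤ 1) :
    ∑ w, lamE w •
        (lam • χv + (1 - lam) • Measure.map (fun x => (VE w).mulVec x) (χE w))
      + ∑ u, lamA u •
          Measure.map (fun y => (VA u)ᵀ.mulVec y)
            (lam • χA u + (1 - lam) • Measure.map (fun x => (VA u).mulVec x) χv)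
      = χv := by
  have hone : lam + (1 - lam) = 1 := add_tsub_cancel_of_le hlam
  have hE : ∀ w, lam • χv + (1 - lam) • Measure.map (fun x => (VE w).mulVec x) (χE w)
      = χv := by
    intro w
    rw [← hemb w, ← add_smul, hone, one_smul]
  have hA : ∀ u, Measure.map (fun y => (VA u)ᵀ.mulVec y)
      (lam • χA u + (1 - lam) • Measure.map (fun x => (VA u).mulVec x) χv) = χv := by
    intro u
    rw [← habs u, ← add_smul, hone, one_smul, habs u,
      Measure.map_map (mulVec_measurable _) (mulVec_measurable _)]
    have : ((fun y => (VA u)ᵀ.mulVec y) ∘ fun x => (VA u).mulVec x)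
        = fun x : Fin dv → ℝ => x := by
      funext x
      simp [Function.comp, Matrix.mulVec_mulVec, hstiefel u]
    rw [this, Measure.map_id']
  simp_rw [hE, hA, ← Finset.sum_smul]
  rw [← add_smul, hsum, one_smul]
end
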